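/- Let g be a well-typed RDF graph over a type ι of identifiers, and let t₁, t₂ be schema triples with t₁ ⪯T t₂ (componentwise is-more-specific). Then the natural interpretation of t₁ is contained in that of t₂: ⟦t₁⟧* ⊆ ⟦t₂⟧*. -/
import Mathlib


/-- `c` is a strict subclass of `c'` (rdfs:subClassOf+). -/
def subClassTC {ι : Type*} (g : Set (ι × ι × ι)) (sc : ι) (c c' : ι) : Prop :=
  Relation.TransGen (fun a b => (a, sc, b) ∈ g) c c'

/-- `p` is a strict subproperty of `p'` (rdfs:subPropertyOf+). -/
def subPropTC {ι : Type*} (g : Set (ι × ι × ι)) (sp : ι) (p p' : ι) : Prop :=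
  Relation.TransGen (fun a b => (a, sp, b) ∈ g) p p'

/-- The interpretation of a class `c`. -/
def classInterp {ι : Type*} (g : Set (ι × ι × ι)) (ty sc : ι) (c : ι) : Set ι :=
  {i | (i, ty, c) ∈ g ∨ ∃ c', subClassTC g sc c' c ∧ (i, ty, c') ∈ g}

/-- The is-more-specific relation `⪯` on identifiers. -/
def moreSpecific {ι : Type*} (g : Set (ι × ι × ι)) (ty sc sp : ι) (i₁ i₂ : ι) : Prop :=
  i₁ = i₂ ∨ subClassTC g sc i₁ i₂ ∨ subPropTC g sp i₁ i₂ ∨ i₁ ∈ classInterp g ty sc i₂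

/-- `i` is an individual identifier: it occurs as the subject of a ty-triple. -/
def isIndividual {ι : Type*} (g : Set (ι × ι × ι)) (ty : ι) (i : ι) : Prop :=
  ∃ c, (i, ty, c) ∈ g

/-- `i` is a class identifier: it occurs as the object of a ty-triple or as the
subject or object of an sc-triple. -/
def isClassId {ι : Type*} (g : Set (ι × ι × ι)) (ty sc : ι) (i : ι) : Prop :=
  (∃ j, (j, ty, i) ∈ g) ∨ (∃ c, (i, sc, c) ∈ g) ∨ (∃ c, (c, sc, i) ∈ g)

/-- `i` is a predicate identifier: it occurs as the subject or object of an sp-triple. -/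
def isPredId {ι : Type*} (g : Set (ι × ι × ι)) (sp : ι) (i : ι) : Prop :=
  (∃ q, (i, sp, q) ∈ g) ∨ (∃ q, (q, sp, i) ∈ g)

/-- The graph is well-typed: individuals, classes and predicates are pairwise disjoint. -/
def WellTyped {ι : Type*} (g : Set (ι × ι × ι)) (ty sc sp : ι) : Prop :=
  (∀ i : ι, ¬(isIndividual g ty i ∧ isClassId g ty sc i)) ∧
  (∀ i : ι, ¬(isIndividual g ty i ∧ isPredId g sp i)) ∧
  (∀ i : ι, ¬(isClassId g ty sc i ∧ isPredId g sp i))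

/-- The componentwise is-more-specific relation `⪯T` on triples. -/
def tripleMoreSpecific {ι : Type*} (g : Set (ι × ι × ι)) (ty sc sp : ι)
    (t₁ t₂ : ι × ι × ι) : Prop :=
  moreSpecific g ty sc sp t₁.1 t₂.1 ∧ moreSpecific g ty sc sp t₁.2.1 t₂.2.1 ∧
    moreSpecific g ty sc sp t₁.2.2 t₂.2.2

/-- The natural interpretation of a schema triple. -/
def natTripleInterp {ι : Type*} (g : Set (ι × ι × ι)) (ty sc sp : ι)
    (t : ι × ι × ι) : Set (ι × ι × ι) :=
  {x | x ∈ g ∧ moreSpecific g ty sc sp x.1 t.1 ∧ moreSpecific g ty sc sp x.2.1 t.2.1 ∧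
       moreSpecific g ty sc sp x.2.2 t.2.2}


lemma subClassTC_classId_right {ι : Type*} {g : Set (ι × ι × ι)} {ty sc : ι} {x a : ι}
    (h : subClassTC g sc x a) : isClassId g ty sc a := by
  induction h with
  | single h => exact Or.inr (Or.inr ⟨_, h⟩)
  | tail _ h _ => exact Or.inr (Or.inr ⟨_, h⟩)

lemma subClassTC_classId_left {ι : Type*} {g : Set (ι × ι × ι)} {ty sc : ι} {x a : ι}
    (h : subClassTC g sc x a) : isClassId g ty sc x := by
  induction h with
  | single h => exact Or.inr (Or.inl ⟨_, h⟩)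
  | tail _ _ ih => exact ih

lemma subPropTC_predId_left {ι : Type*} {g : Set (ι × ι × ι)} {sp : ι} {x a : ι}
    (h : subPropTC g sp x a) : isPredId g sp x := by
  induction h with
  | single h => exact Or.inl ⟨_, h⟩
  | tail _ _ ih => exact ih

lemma subPropTC_predId_right {ι : Type*} {g : Set (ι × ι × ι)} {sp : ι} {x a : ι}
    (h : subPropTC g sp x a) : isPredId g sp a := by
  induction h with
  | single h => exact Or.inr ⟨_, h⟩
  | tail _ h _ => exact Or.inr ⟨_, h⟩

lemma classInterp_classId {ι : Type*} {g : Set (ι × ι × ι)} {ty sc : ι} {x a : ι}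
    (h : x ∈ classInterp g ty sc a) : isClassId g ty sc a := by
  rcases h with h | ⟨c', hc, ht⟩
  · exact Or.inl ⟨_, h⟩
  · exact subClassTC_classId_right hc

lemma classInterp_individual {ι : Type*} {g : Set (ι × ι × ι)} {ty sc : ι} {x a : ι}
    (h : x ∈ classInterp g ty sc a) : isIndividual g ty x := by
  rcases h with h | ⟨c', _, ht⟩
  · exact ⟨_, h⟩
  · exact ⟨_, ht⟩

lemma moreSpecific_trans {ι : Type*} {g : Set (ι × ι × ι)} {ty sc sp : ι}
    (hwt : WellTyped g ty sc sp) {x a b : ι}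
    (h1 : moreSpecific g ty sc sp x a) (h2 : moreSpecific g ty sc sp a b) :
    moreSpecific g ty sc sp x b := by
  obtain ⟨hIC, hIP, hCP⟩ := hwt
  rcases h1 with rfl | h1 | h1 | h1
  · exact h2
  · rcases h2 with rfl | h2 | h2 | h2
    · exact Or.inr (Or.inl h1)
    · exact Or.inr (Or.inl (h1.trans h2))
    · exact ((hCP a) ⟨subClassTC_classId_right h1, subPropTC_predId_left h2⟩).elim
    · exact ((hIC a) ⟨classInterp_individual h2, subClassTC_classId_right h1⟩).elim
  · rcases h2 with rfl | h2 | h2 | h2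
    · exact Or.inr (Or.inr (Or.inl h1))
    · exact ((hCP a) ⟨subClassTC_classId_left h2, subPropTC_predId_right h1⟩).elim
    · exact Or.inr (Or.inr (Or.inl (h1.trans h2)))
    · exact ((hIP a) ⟨classInterp_individual h2, subPropTC_predId_right h1⟩).elim
  · rcases h2 with rfl | h2 | h2 | h2
    · exact Or.inr (Or.inr (Or.inr h1))
    · refine Or.inr (Or.inr (Or.inr ?_))
      rcases h1 with h1 | ⟨c', hc, ht⟩
      · exact Or.inr ⟨a, h2, h1⟩
      · exact Or.inr ⟨c', hc.trans h2, ht⟩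
    · exact ((hCP a) ⟨classInterp_classId h1, subPropTC_predId_left h2⟩).elim
    · exact ((hIC a) ⟨classInterp_individual h2, classInterp_classId h1⟩).elim

theorem natTripleInterp_mono {ι : Type*} (g : Set (ι × ι × ι)) (ty sc sp : ι)
    (hwt : WellTyped g ty sc sp) (t₁ t₂ : ι × ι × ι)
    (h : tripleMoreSpecific g ty sc sp t₁ t₂) :
    natTripleInterp g ty sc sp t₁ ⊆ natTripleInterp g ty sc sp t₂ := by
  rintro ⟨s', p', o'⟩ ⟨hg, hs, hp, ho⟩
  exact ⟨hg, moreSpecific_trans hwt hs h.1, moreSpecific_trans hwt hp h.2.1,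
    moreSpecific_trans hwt ho h.2.2⟩
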